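/- arXiv:1406.6550 — 3 statements merged into one kernel-verified Lean document; each statement's English description precedes it below -/
import Mathlib

section
/- Suppose P_1, ..., P_ℓ are disjoint finite subsets of a set P equipped with a symmetric ternary relation E, such that every triple (p, q, i) with p, q ∈ (P_1 ∪ ... ∪ P_ℓ) \ P_i is good, meaning either (p, q, r) ∈ E for all r ∈ P_i or (p, q, r) ∉ E for all r ∈ P_i. Then for all 1 ≤ i_1 < i_2 < i_3 ≤ ℓ, the triple of parts (P_{i_1}, P_{i_2}, P_{i_3}) is homogeneous: either every triple with one point in each part is in E, or no such triple is in E. -/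
theorem good_triples_imply_homogeneous {α : Type*} [DecidableEq α] (ℓ : ℕ)
    (E : α → α → α → Prop)
    (hsym1 : ∀ p q r, E p q r ↔ E q p r)
    (hsym2 : ∀ p q r, E p q r ↔ E p r q)
    (P : Fin ℓ → Finset α)
    (hne : ∀ i, (P i).Nonempty)
    (hdisj : ∀ i j, i ≠ j → Disjoint (P i) (P j))
    (hgood : ∀ i : Fin ℓ, ∀ p q : α,
      p ∈ Finset.biUnion Finset.univ P → q ∈ Finset.biUnion Finset.univ P →
      p ∉ P i → q ∉ P i → p ≠ q →
      (∀ r ∈ P i, E p q r) ∨ (∀ r ∈ P i, ¬ E p q r)) :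
    ∀ i₁ i₂ i₃ : Fin ℓ, i₁ < i₂ → i₂ < i₃ →
      (∀ p ∈ P i₁, ∀ q ∈ P i₂, ∀ r ∈ P i₃, E p q r) ∨
      (∀ p ∈ P i₁, ∀ q ∈ P i₂, ∀ r ∈ P i₃, ¬ E p q r) := by
  intro i₁ i₂ i₃ h12 h23
  have h13 : i₁ < i₃ := h12.trans h23
  -- helpers
  have mem : ∀ {i : Fin ℓ} {x : α}, x ∈ P i → x ∈ Finset.biUnion Finset.univ P := by
    intro i x hx
    exact Finset.mem_biUnion.mpr ⟨i, Finset.mem_univ i, hx⟩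
  have nin : ∀ {i j : Fin ℓ} {x : α}, i ≠ j → x ∈ P i → x ∉ P j := by
    intro i j x hij hx hxj
    exact (Finset.disjoint_left.mp (hdisj i j hij)) hx hxj
  have neq : ∀ {i j : Fin ℓ} {x y : α}, i ≠ j → x ∈ P i → y ∈ P j → x ≠ y := by
    intro i j x y hij hx hy hxy
    exact nin hij hx (hxy ▸ hy)
  have n12 : i₁ ≠ i₂ := ne_of_lt h12
  have n13 : i₁ ≠ i₃ := ne_of_lt h13
  have n23 : i₂ ≠ i₃ := ne_of_lt h23
  -- constancy in the third coordinate
  have c3 : ∀ p ∈ P i₁, ∀ q ∈ P i₂, ∀ r ∈ P i₃, ∀ r' ∈ P i₃, E p q r → E p q r' := by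
    intro p hp q hq r hr r' hr' h
    rcases hgood i₃ p q (mem hp) (mem hq) (nin n13 hp) (nin n23 hq) (neq n12 hp hq) with H | H
    · exact H r' hr'
    · exact absurd h (H r hr)
  -- constancy in the second coordinate
  have c2 : ∀ p ∈ P i₁, ∀ q ∈ P i₂, ∀ q' ∈ P i₂, ∀ r ∈ P i₃, E p q r → E p q' r := by
    intro p hp q hq q' hq' r hr h
    rcases hgood i₂ p r (mem hp) (mem hr) (nin n12 hp) (nin (Ne.symm n23) hr)
      (neq n13 hp hr) with H | H
    · exact (hsym2 p q' r).mpr (H q' hq')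
    · exact absurd ((hsym2 p q r).mp h) (H q hq)
  -- constancy in the first coordinate
  have c1 : ∀ p ∈ P i₁, ∀ p' ∈ P i₁, ∀ q ∈ P i₂, ∀ r ∈ P i₃, E p q r → E p' q r := by
    intro p hp p' hp' q hq r hr h
    rcases hgood i₁ q r (mem hq) (mem hr) (nin (Ne.symm n12) hq) (nin (Ne.symm n13) hr)
      (neq n23 hq hr) with H | H
    · exact (hsym1 p' q r).mpr ((hsym2 q p' r).mpr (H p' hp'))
    · exact absurd ((hsym2 q p r).mp ((hsym1 p q r).mp h)) (H p hp)
  obtain ⟨p₀, hp₀⟩ := hne i₁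
  obtain ⟨q₀, hq₀⟩ := hne i₂
  obtain ⟨r₀, hr₀⟩ := hne i₃
  by_cases h : E p₀ q₀ r₀
  · left
    intro p hp q hq r hr
    exact c3 p hp q hq r₀ hr₀ r hr (c2 p hp q₀ hq₀ q hq r₀ hr₀ (c1 p₀ hp₀ p hp q₀ hq₀ r₀ hr₀ h))
  · right
    intro p hp q hq r hr hE
    exact h (c3 p₀ hp₀ q₀ hq₀ r hr r₀ hr₀ (c2 p₀ hp₀ q hq q₀ hq₀ r hr (c1 p hp p₀ hp₀ q hq r hr hE)))
end

section
/- For every integer ℓ ≥ 1 there exists a set P_ℓ of 1681^ℓ real numbers together with 7ℓ symmetric binary relations E_1, ..., E_{7ℓ} on P_ℓ whose union is all pairs of P_ℓ, such that each relation is translation invariant ((x,y) ∈ E_i iff (x+C, y+C) ∈ E_i for all real C) and each graph (P_ℓ, E_i) is triangle-free, provided there exists a partition of {1, ..., 1680} into 7 sum-free sets. -/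
/-!
Take as points the reals `∑ aₘ Bᵐ` with digits `0 ≤ aₘ ≤ 1680` in base `B = 5041`. Colour a pair
`x ≠ y` by `(k, j)` when the `k`-th digit of `x - y`, written in base `B` with digits in
`[-1680, 1680]`, has absolute value in `A j`; a nonzero difference has a nonzero digit, so every pair
gets a colour. Since `3 · 1680 < B`, such expansions of `x - y`, `y - z` and `x - z` must add up
digitwise, so a monochromatic triangle would give `a + b = c` with `|a|, |b|, |c|` in one sum-free
`A j`.
-/

open Finset

def IsSumFree (S : Finset ℕ) : Prop := ∀ x ∈ S, ∀ y ∈ S, x + y ∉ S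

theorem IsSumFree.natAbs_add_ne {S : Finset ℕ} (hS : IsSumFree S) {a b : ℤ}
    (ha : a.natAbs ∈ S) (hb : b.natAbs ∈ S) (hab : (a + b).natAbs ∈ S) : False := by
  rcases (by omega : a.natAbs + b.natAbs = (a + b).natAbs ∨ (a + b).natAbs + b.natAbs = a.natAbs ∨
      (a + b).natAbs + a.natAbs = b.natAbs) with h | h | h
  · exact hS _ ha _ hb (h ▸ hab)
  · exact hS _ hab _ hb (h ▸ ha)
  · exact hS _ hab _ ha (h ▸ hb)

section Digits

variable (B : ℕ) {ℓ : ℕ}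

def digitValue (c : Fin ℓ → ℤ) : ℤ := ∑ m, c m * (B : ℤ) ^ (m : ℕ)

variable {B}

theorem digitValue_add (c e : Fin ℓ → ℤ) :
    digitValue B (c + e) = digitValue B c + digitValue B e := by
  simp [digitValue, add_mul, sum_add_distrib]

theorem digitValue_sub (c e : Fin ℓ → ℤ) :
    digitValue B (c - e) = digitValue B c - digitValue B e := by
  simp [digitValue, sub_mul, sum_sub_distrib]

theorem digitValue_neg (c : Fin ℓ → ℤ) : digitValue B (-c) = -digitValue B c := by
  simp [digitValue, neg_mul, sum_neg_distrib]

theorem digitValue_succ (c : Fin (ℓ + 1) → ℤ) :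
    digitValue B c = c 0 + B * digitValue B (Fin.tail c) := by
  simp only [digitValue, Fin.sum_univ_succ, Fin.val_zero, pow_zero, mul_one, Fin.val_succ,
    pow_succ, mul_sum, Fin.tail]
  congr 1
  exact sum_congr rfl fun m _ => by ring

theorem eq_zero_of_digitValue_eq_zero {c : Fin ℓ → ℤ} (hc : ∀ m, (c m).natAbs < B)
    (h : digitValue B c = 0) : c = 0 := by
  induction ℓ with
  | zero => exact Subsingleton.elim _ _
  | succ ℓ ih =>
    rw [digitValue_succ] at h
    have hB : (B : ℤ) ≠ 0 := by have := hc 0; omega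
    have h0 : c 0 = 0 := Int.eq_zero_of_dvd_of_natAbs_lt_natAbs (d := (B : ℤ)) (n := c 0)
      ⟨-digitValue B (Fin.tail c), by linarith⟩ (by simpa using hc 0)
    have htail : Fin.tail c = 0 := ih (fun m => hc m.succ) <| by
      rw [h0, zero_add] at h; exact (mul_eq_zero.1 h).resolve_left hB
    ext m
    cases m using Fin.cases with
    | zero => exact h0
    | succ m => exact congrFun htail m

variable (B) (N : ℕ)

def digitSet (k : Fin ℓ) (S : Finset ℕ) : Set ℤ :=
  {d | ∃ c : Fin ℓ → ℤ, digitValue B c = d ∧ (∀ m, (c m).natAbs ≤ N) ∧ (c k).natAbs ∈ S}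

variable {B N} {k : Fin ℓ} {S : Finset ℕ}

theorem neg_mem_digitSet {d : ℤ} (hd : d ∈ digitSet B N k S) : -d ∈ digitSet B N k S := by
  obtain ⟨c, rfl, hcN, hck⟩ := hd
  exact ⟨-c, digitValue_neg c, fun m => by simpa using hcN m, by simpa using hck⟩

theorem add_notMem_digitSet (hS : IsSumFree S) (hB : 3 * N < B) {d e : ℤ}
    (hd : d ∈ digitSet B N k S) (he : e ∈ digitSet B N k S) : d + e ∉ digitSet B N k S := by
  rintro ⟨f, hf, hfN, hfk⟩
  obtain ⟨c, rfl, hcN, hck⟩ := hd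
  obtain ⟨e, rfl, heN, hek⟩ := he
  have hzero : c + e - f = 0 := by
    refine eq_zero_of_digitValue_eq_zero (B := B) (fun m => ?_) ?_
    · have := hcN m; have := heN m; have := hfN m
      simp only [Pi.sub_apply, Pi.add_apply]; omega
    · rw [digitValue_sub, digitValue_add, hf, sub_self]
  have hk : f k = c k + e k := by simpa [sub_eq_zero, eq_comm] using congrFun hzero k
  exact hS.natAbs_add_ne hck hek (hk ▸ hfk)

end Digits

section DiffRel

def DiffRel (D : Set ℤ) (x y : ℝ) : Prop := ∃ d ∈ D, x - y = d

variable {D : Set ℤ}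

theorem diffRel_comm (hD : ∀ d ∈ D, -d ∈ D) {x y : ℝ} : DiffRel D x y ↔ DiffRel D y x := by
  suffices ∀ x y, DiffRel D x y → DiffRel D y x from ⟨this x y, this y x⟩
  rintro x y ⟨d, hd, hxy⟩
  exact ⟨-d, hD d hd, by push_cast; linarith⟩

theorem diffRel_add_right_iff {x y : ℝ} (C : ℝ) :
    DiffRel D x y ↔ DiffRel D (x + C) (y + C) := by
  simp only [DiffRel, add_sub_add_right_eq_sub]

theorem not_diffRel_triangle (hD : ∀ d ∈ D, ∀ e ∈ D, d + e ∉ D) {x y z : ℝ} :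
    ¬ (DiffRel D x y ∧ DiffRel D y z ∧ DiffRel D x z) := by
  rintro ⟨⟨d, hd, hxy⟩, ⟨e, he, hyz⟩, ⟨f, hf, hxz⟩⟩
  have : f = d + e := by exact_mod_cast (by linarith : (f : ℝ) = d + e)
  exact hD d hd e he (this ▸ hf)

end DiffRel

section Points

noncomputable def digitPoints (B N ℓ : ℕ) : Finset ℝ :=
  univ.image fun a : Fin ℓ → Fin (N + 1) => (digitValue B (fun m => (a m : ℤ)) : ℝ)

variable {B N ℓ : ℕ}

theorem card_digitPoints (hB : N < B) : (digitPoints B N ℓ).card = (N + 1) ^ ℓ := by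
  rw [digitPoints, card_image_of_injective, card_univ, Fintype.card_fun, Fintype.card_fin,
    Fintype.card_fin]
  intro a b hab
  have hzero := eq_zero_of_digitValue_eq_zero (B := B) (c := fun m => (a m : ℤ) - b m)
    (fun m => by have := (a m).is_lt; have := (b m).is_lt; omega)
    (by rw [← Pi.sub_def, digitValue_sub, sub_eq_zero]; exact Int.cast_injective (α := ℝ) hab)
  ext m
  simpa [sub_eq_zero] using congrFun hzero m

theorem exists_diffRel_of_ne {ι : Type*} [Fintype ι] {A : ι → Finset ℕ}
    (hcover : Icc 1 N ⊆ univ.biUnion A) {x y : ℝ} (hx : x ∈ digitPoints B N ℓ)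
    (hy : y ∈ digitPoints B N ℓ) (hxy : x ≠ y) :
    ∃ (k : Fin ℓ) (j : ι), DiffRel (digitSet B N k (A j)) x y := by
  obtain ⟨a, -, rfl⟩ := mem_image.1 hx
  obtain ⟨b, -, rfl⟩ := mem_image.1 hy
  set c : Fin ℓ → ℤ := fun m => (a m : ℤ) - b m
  have hcN : ∀ m, (c m).natAbs ≤ N := fun m => by
    have := (a m).is_lt; have := (b m).is_lt; simp only [c]; omega
  obtain ⟨k, hk⟩ : ∃ k, c k ≠ 0 := by
    by_contra! h
    refine hxy (congrArg _ (congrArg _ (funext fun m => ?_)))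
    simpa [c, sub_eq_zero] using h m
  obtain ⟨j, -, hj⟩ := mem_biUnion.1 (hcover (mem_Icc.2 ⟨Int.natAbs_pos.2 hk, hcN k⟩))
  exact ⟨k, j, _, ⟨c, rfl, hcN, hj⟩, by simp [c, ← Pi.sub_def, digitValue_sub]⟩

end Points

theorem multicolor_triangle_free_construction_general
    (A : Fin 7 → Finset ℕ)
    (hcover : (Finset.univ.biUnion A) = Finset.Icc 1 1680)
    (hsf : ∀ i, ∀ x ∈ A i, ∀ y ∈ A i, x + y ∉ A i) :
    ∀ ℓ : ℕ, 1 ≤ ℓ →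
      ∃ (P : Finset ℝ) (E : Fin (7 * ℓ) → ℝ → ℝ → Prop),
        P.card = 1681 ^ ℓ ∧
        (∀ i x y, E i x y ↔ E i y x) ∧
        (∀ x ∈ P, ∀ y ∈ P, x ≠ y → ∃ i, E i x y) ∧
        (∀ i x y C, E i x y ↔ E i (x + C) (y + C)) ∧
        (∀ i : Fin (7 * ℓ), ¬ ∃ x ∈ P, ∃ y ∈ P, ∃ z ∈ P,
          x ≠ y ∧ y ≠ z ∧ x ≠ z ∧ E i x y ∧ E i y z ∧ E i x z) := by
  intro ℓ _
  let D (i : Fin (7 * ℓ)) : Set ℤ :=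
    digitSet 5041 1680 (finProdFinEquiv.symm i).2 (A (finProdFinEquiv.symm i).1)
  refine ⟨digitPoints 5041 1680 ℓ, fun i => DiffRel (D i), card_digitPoints (by norm_num),
    fun i x y => diffRel_comm fun d => neg_mem_digitSet, ?_,
    fun i x y C => diffRel_add_right_iff C, ?_⟩
  · intro x hx y hy hxy
    obtain ⟨k, j, hjk⟩ := exists_diffRel_of_ne hcover.ge hx hy hxy
    exact ⟨finProdFinEquiv (j, k), by simpa only [D, Equiv.symm_apply_apply] using hjk⟩
  · rintro i ⟨x, -, y, -, z, -, -, -, -, hxy, hyz, hxz⟩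
    exact not_diffRel_triangle (fun d hd e he => add_notMem_digitSet (hsf _) (by norm_num) hd he)
      ⟨hxy, hyz, hxz⟩

theorem multicolor_triangle_free_construction
    (A : Fin 7 → Finset ℕ)
    (hcover : (Finset.univ.biUnion A) = Finset.Icc 1 1680)
    (hdisj : ∀ i j, i ≠ j → Disjoint (A i) (A j))
    (hsf : ∀ i, ∀ x ∈ A i, ∀ y ∈ A i, x + y ∉ A i) :
    ∀ ℓ : ℕ, 1 ≤ ℓ →
      ∃ (P : Finset ℝ) (E : Fin (7 * ℓ) → ℝ → ℝ → Prop),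
        P.card = 1681 ^ ℓ ∧
        (∀ i x y, E i x y ↔ E i y x) ∧
        (∀ x ∈ P, ∀ y ∈ P, x ≠ y → ∃ i, E i x y) ∧
        (∀ i x y C, E i x y ↔ E i (x + C) (y + C)) ∧
        (∀ i : Fin (7 * ℓ), ¬ ∃ x ∈ P, ∃ y ∈ P, ∃ z ∈ P,
          x ≠ y ∧ y ≠ z ∧ x ≠ z ∧ E i x y ∧ E i y z ∧ E i x z) :=
  multicolor_triangle_free_construction_general A hcover hsf
end

section
/- Blow-up preserves triangle-freeness of difference graphs: let A be a finite sum-free set of positive integers with max element M, let Q ⊂ ℝ be finite with diameter D, and let C > 2D·(M+2). Define P = ⋃_{i=1}^{n} (Q + iC) and the relation E on P by (x,y) ∈ E iff there exists z ∈ A with | |x-y|/C − z | < 1/1000 and C/2 ≤ |x-y| ≤ (n+1)C. Then the graph (P, E) is triangle-free. -/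
/-!
A point of `P` is `q + i * C` with `q ∈ Q` and `1 ≤ i ≤ n`. Since `Q` has diameter `D < C / 2`,
the distance of two such points is within `D` of `|i - j| * C`, so an edge between them forces
`|i - j|` to be the element of `A` that `|x - y| / C` is close to. A triangle on blocks `i, j, k`
would then put `|i - j|`, `|j - k|`, `|i - k|` in `A`; but one of these is the sum of the other two.
-/

theorem natAbs_sub_notMem_of_sumFree {A : Set ℕ}
    (hsf : ∀ a ∈ A, ∀ b ∈ A, a + b ∉ A) {i j k : ℤ}
    (hij : (i - j).natAbs ∈ A) (hjk : (j - k).natAbs ∈ A) : (i - k).natAbs ∉ A := by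
  intro hik
  have : (i - j).natAbs = (j - k).natAbs + (i - k).natAbs ∨
      (j - k).natAbs = (i - j).natAbs + (i - k).natAbs ∨
      (i - k).natAbs = (i - j).natAbs + (j - k).natAbs := by
    omega
  rcases this with h | h | h
  · exact hsf _ hjk _ hik (h ▸ hij)
  · exact hsf _ hij _ hik (h ▸ hjk)
  · exact hsf _ hij _ hjk (h ▸ hik)

theorem Finset.abs_sub_le_max'_sub_min' {α : Type*} [AddCommGroup α] [LinearOrder α]
    [IsOrderedAddMonoid α] {s : Finset α} (hs : s.Nonempty) {x y : α} (hx : x ∈ s) (hy : y ∈ s) :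
    |x - y| ≤ s.max' hs - s.min' hs :=
  abs_sub_le_iff.mpr
    ⟨sub_le_sub (s.le_max' x hx) (s.min'_le y hy), sub_le_sub (s.le_max' y hy) (s.min'_le x hx)⟩

theorem abs_abs_translate_sub_le {α : Type*} [CommRing α] [LinearOrder α] [IsStrictOrderedRing α]
    (q q' C : α) (i j : ℤ) :
    abs (|(q + i * C) - (q' + j * C)| - |(i - j : α)| * |C|) ≤ |q - q'| := by
  rw [← abs_mul]
  calc _ ≤ |(q + i * C) - (q' + j * C) - (i - j) * C| := abs_abs_sub_abs_le_abs_sub _ _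
    _ = |q - q'| := by congr 1; ring

theorem Int.natAbs_eq_of_abs_sub_lt_one {d : ℤ} {a : ℕ} (h : |(|d| : ℝ) - a| < 1) :
    d.natAbs = a := by
  have h' : |(|d| - a : ℤ)| < 1 := by exact_mod_cast h
  have := Int.abs_lt_one_iff.mp h'
  rw [sub_eq_zero, Int.abs_eq_natAbs] at this
  exact_mod_cast this

theorem natAbs_sub_eq_of_abs_div_sub_lt {C D q q' : ℝ} (hC : 0 < C) (hDC : 2 * D < C)
    (hq : |q - q'| ≤ D) {i j : ℤ} {a : ℕ}
    (ha : abs (|(q + i * C) - (q' + j * C)| / C - a) < 1 / 2) :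
    (i - j).natAbs = a := by
  set t := |(q + i * C) - (q' + j * C)| / C
  have hround : abs (t - |(i - j : ℝ)|) < 1 / 2 := by
    have h := abs_abs_translate_sub_le q q' C i j
    rw [abs_of_pos hC] at h
    rw [show t - |(i - j : ℝ)| = (|(q + i * C) - (q' + j * C)| - |(i - j : ℝ)| * C) / C by
      rw [sub_div, mul_div_cancel_right₀ _ hC.ne'], abs_div, abs_of_pos hC, div_lt_iff₀ hC]
    linarith
  apply Int.natAbs_eq_of_abs_sub_lt_one
  push_cast
  calc abs (|(i - j : ℝ)| - a) ≤ abs (|(i - j : ℝ)| - t) + |t - a| := abs_sub_le _ _ _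
    _ < 1 := by rw [abs_sub_comm] at hround; linarith

theorem blowup_preserves_triangle_free_general
    (A : Finset ℕ)
    (hsf : ∀ a ∈ A, ∀ b ∈ A, a + b ∉ A)
    (M : ℕ)
    (Q : Finset ℝ) (hQ : Q.Nonempty)
    (D : ℝ) (hD : D = Q.max' hQ - Q.min' hQ)
    (C : ℝ) (hC : C > 2 * D * (M + 2))
    (n : ℕ)
    (P : Finset ℝ)
    (hP : P = (Finset.Icc 1 n).biUnion fun i => Q.image fun q => q + i * C)
    (E : ℝ → ℝ → Prop)
    (hE : ∀ x y, E x y ↔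
      (C / 2 ≤ |x - y| ∧ |x - y| ≤ (n + 1) * C ∧
        ∃ z ∈ A, abs (|x - y| / C - (z : ℝ)) < 1 / 1000)) :
    ¬ ∃ x ∈ P, ∃ y ∈ P, ∃ z ∈ P,
      x ≠ y ∧ y ≠ z ∧ x ≠ z ∧ E x y ∧ E y z ∧ E x z := by
  have hD0 : 0 ≤ D := hD ▸ sub_nonneg.mpr (Q.min'_le_max' hQ)
  have hDC : 2 * D < C := by nlinarith [mul_nonneg hD0 (Nat.cast_nonneg (α := ℝ) M)]
  have hC0 : 0 < C := by linarith
  have block_dist_mem : ∀ {i j : ℕ} {q q' : ℝ}, q ∈ Q → q' ∈ Q →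
      E (q + i * C) (q' + j * C) → ((i : ℤ) - j).natAbs ∈ A := by
    intro i j q q' hq hq' hqq'
    obtain ⟨-, -, a, ha, hclose⟩ := (hE _ _).mp hqq'
    have hdiam : |q - q'| ≤ D := hD ▸ Q.abs_sub_le_max'_sub_min' hQ hq hq'
    have := natAbs_sub_eq_of_abs_div_sub_lt (i := i) (j := j) hC0 hDC hdiam (a := a)
      (by push_cast; linarith)
    rwa [this]
  rintro ⟨x, hx, y, hy, z, hz, -, -, -, exy, eyz, exz⟩
  simp only [hP, Finset.mem_biUnion, Finset.mem_image] at hx hy hz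
  obtain ⟨i, -, qx, hqx, rfl⟩ := hx
  obtain ⟨j, -, qy, hqy, rfl⟩ := hy
  obtain ⟨k, -, qz, hqz, rfl⟩ := hz
  exact natAbs_sub_notMem_of_sumFree hsf (block_dist_mem hqx hqy exy)
    (block_dist_mem hqy hqz eyz) (block_dist_mem hqx hqz exz)

theorem blowup_preserves_triangle_free
    (A : Finset ℕ) (hA0 : ∀ a ∈ A, 1 ≤ a)
    (hsf : ∀ a ∈ A, ∀ b ∈ A, a + b ∉ A)
    (M : ℕ) (hM : ∀ a ∈ A, a ≤ M)
    (Q : Finset ℝ) (hQ : Q.Nonempty)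
    (D : ℝ) (hD : D = Q.max' hQ - Q.min' hQ)
    (C : ℝ) (hC : C > 2 * D * (M + 2))
    (n : ℕ) (hn : 1 ≤ n)
    (P : Finset ℝ)
    (hP : P = (Finset.Icc 1 n).biUnion fun i => Q.image fun q => q + i * C)
    (E : ℝ → ℝ → Prop)
    (hE : ∀ x y, E x y ↔
      (C / 2 ≤ |x - y| ∧ |x - y| ≤ (n + 1) * C ∧
        ∃ z ∈ A, abs (|x - y| / C - (z : ℝ)) < 1 / 1000)) :
    ¬ ∃ x ∈ P, ∃ y ∈ P, ∃ z ∈ P,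
      x ≠ y ∧ y ≠ z ∧ x ≠ z ∧ E x y ∧ E y z ∧ E x z :=
  blowup_preserves_triangle_free_general A hsf M Q hQ D hD C hC n P hP E hE
end
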